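/- If G is a connected (ι,1)-critical graph and D is a minimum isolating set of G, then D is a 3-packing: any two distinct vertices of D are at distance greater than 3 in G. -/

import Mathlib

open SimpleGraph

/-- `v` lies in the closed neighbourhood of the set `D`. -/
def inClosedNbhd {V : Type*} (G : SimpleGraph V) (D : Set V) (v : V) : Prop :=
  ∃ d ∈ D, d = v ∨ G.Adj d v

/-- `D` is an isolating set of `G`: the graph induced on the vertices outside
`N[D]` has no edges. -/
def IsIsolating {V : Type*} (G : SimpleGraph V) (D : Set V) : Prop :=
  ∀ u v : V, G.Adj u v → inClosedNbhd G D u ∨ inClosedNbhd G D v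

/-- The isolation number of a finite graph. -/
noncomputable def iso {V : Type*} (G : SimpleGraph V) [Fintype V] : ℕ :=
  sInf {n | ∃ D : Finset V, D.card = n ∧ IsIsolating G ↑D}

/-- The graph obtained from `G` by subdividing each edge in `A` once; the new
(subdivision) vertices are the elements of `A`. -/
def subdivide {V : Type*} (G : SimpleGraph V) (A : Finset (Sym2 V)) :
    SimpleGraph (V ⊕ {e : Sym2 V // e ∈ A}) where
  Adj x y :=
    match x, y with
    | Sum.inl u, Sum.inl v => G.Adj u v ∧ s(u, v) ∉ A
    | Sum.inl u, Sum.inr e => u ∈ (e : Sym2 V)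
    | Sum.inr e, Sum.inl u => u ∈ (e : Sym2 V)
    | Sum.inr _, Sum.inr _ => False
  symm := by
    constructor
    rintro (u | e) (v | f) h <;> dsimp only at h ⊢ <;>
      first
        | exact ⟨h.1.symm, by rw [Sym2.eq_swap]; exact h.2⟩
        | exact h
        | exact h.elim
  loopless := by
    constructor
    rintro (u | e) h <;> dsimp only at h <;>
      first
        | exact G.irrefl h.1
        | exact h

/-- A graph is `(ι,q)`-critical. -/
def IotaCritical {V : Type*} (G : SimpleGraph V) [Fintype V] (q : ℕ) : Prop :=
  (∀ A : Finset (Sym2 V), ↑A ⊆ G.edgeSet → A.card = q →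
      iso G < iso (subdivide G A)) ∧
  (∃ A : Finset (Sym2 V), ↑A ⊆ G.edgeSet ∧ A.card = q - 1 ∧
      iso (subdivide G A) = iso G)

/-!
Let `D` be a minimum isolating set and `pq` an edge. If each endpoint of `pq` lies in the closed
neighbourhood of `D` in `G - pq`, then `D` is still isolating after `pq` is subdivided, so
subdividing `pq` does not raise `ι`, contradicting criticality. If two vertices `x, y` of `D`
were at distance at most `3`, a shortest `x`–`y` path would contain such an edge: the edge
`xy`, the last edge `ay` of `x a y`, or the middle edge `ab` of `x a b y`.
-/

section Subdivision

variable {V : Type*} {G : SimpleGraph V}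

lemma inClosedNbhd_self {D : Set V} {d : V} (hd : d ∈ D) : inClosedNbhd G D d :=
  ⟨d, hd, Or.inl rfl⟩

lemma inClosedNbhd_deleteEdges_pair {D : Set V} {d a b : V} (hd : d ∈ D) (hda : G.Adj d a)
    (hdb : d ≠ b) : inClosedNbhd (G.deleteEdges {s(a, b)}) D a :=
  ⟨d, hd, Or.inr (deleteEdges_adj.2 ⟨hda, by simp [hda.ne, hdb]⟩)⟩

lemma inClosedNbhd_deleteEdges_or_mem_edge {A : Set (Sym2 V)} {D : Set V} {u : V}
    (h : inClosedNbhd G D u) : inClosedNbhd (G.deleteEdges A) D u ∨ ∃ e ∈ A, u ∈ e := by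
  obtain ⟨d, hd, rfl | hadj⟩ := h
  · exact Or.inl (inClosedNbhd_self hd)
  · by_cases he : s(d, u) ∈ A
    · exact Or.inr ⟨_, he, Sym2.mem_mk_right d u⟩
    · exact Or.inl ⟨d, hd, Or.inr (deleteEdges_adj.2 ⟨hadj, he⟩)⟩

lemma inClosedNbhd_subdivide_inl {A : Finset (Sym2 V)} {D : Set V} {u : V}
    (h : inClosedNbhd (G.deleteEdges ↑A) D u) :
    inClosedNbhd (subdivide G A) (Sum.inl '' D) (Sum.inl u) := by
  obtain ⟨d, hd, rfl | hadj⟩ := h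
  · exact inClosedNbhd_self (Set.mem_image_of_mem _ hd)
  · exact ⟨_, Set.mem_image_of_mem _ hd, Or.inr (deleteEdges_adj.1 hadj)⟩

lemma isIsolating_subdivide {A : Finset (Sym2 V)} {D : Set V} (hD : IsIsolating G D)
    (hA : ∀ e ∈ A, ∀ u ∈ e, inClosedNbhd (G.deleteEdges ↑A) D u) :
    IsIsolating (subdivide G A) (Sum.inl '' D) := by
  have cover (u : V) (hu : inClosedNbhd G D u) :
      inClosedNbhd (subdivide G A) (Sum.inl '' D) (Sum.inl u) := by
    apply inClosedNbhd_subdivide_inl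
    obtain h | ⟨e, he, hue⟩ := inClosedNbhd_deleteEdges_or_mem_edge (A := ↑A) hu
    exacts [h, hA e he u hue]
  rintro (u | e) (v | f) hadj
  · exact (hD u v hadj.1).imp (cover u) (cover v)
  · exact Or.inl (inClosedNbhd_subdivide_inl (hA f f.2 u hadj))
  · exact Or.inr (inClosedNbhd_subdivide_inl (hA e e.2 v hadj))
  · exact hadj.elim

variable [Fintype V]

lemma iso_le_card {D : Finset V} (hD : IsIsolating G ↑D) : iso G ≤ D.card :=
  Nat.sInf_le ⟨D, rfl, hD⟩

lemma iso_subdivide_le_card {A : Finset (Sym2 V)} {D : Finset V} (hD : IsIsolating G ↑D)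
    (hA : ∀ e ∈ A, ∀ u ∈ e, inClosedNbhd (G.deleteEdges ↑A) ↑D u) :
    iso (subdivide G A) ≤ D.card := by
  classical
  have hD' : IsIsolating (subdivide G A) ↑(D.image (Sum.inl : V → V ⊕ A)) := by
    rw [Finset.coe_image]
    exact isIsolating_subdivide hD hA
  simpa [Finset.card_image_of_injective _ Sum.inl_injective] using iso_le_card hD'

lemma not_inClosedNbhd_deleteEdges_both_ends
    (hcrit : ∀ e ∈ G.edgeSet, iso G < iso (subdivide G {e}))
    {D : Finset V} (hD : IsIsolating G ↑D) (hmin : D.card = iso G) {p q : V} (hpq : G.Adj p q) :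
    ¬ (inClosedNbhd (G.deleteEdges {s(p, q)}) ↑D p ∧
      inClosedNbhd (G.deleteEdges {s(p, q)}) ↑D q) := by
  rintro ⟨hp, hq⟩
  have hle : iso (subdivide G {s(p, q)}) ≤ D.card := by
    refine iso_subdivide_le_card hD ?_
    simp only [Finset.mem_singleton, Finset.coe_singleton, forall_eq, Sym2.mem_iff]
    rintro u (rfl | rfl)
    exacts [hp, hq]
  exact (hcrit _ hpq).not_ge (hmin ▸ hle)

end Subdivision

lemma adj_chain_of_dist_le_three {V : Type*} {G : SimpleGraph V} {x y : V} (hr : G.Reachable x y)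
    (hne : x ≠ y) (hdist : G.dist x y ≤ 3) :
    G.Adj x y ∨ (∃ a, G.Adj x a ∧ G.Adj a y) ∨
      ∃ a b, G.Adj x a ∧ G.Adj a b ∧ G.Adj b y ∧ x ≠ b ∧ a ≠ y := by
  obtain ⟨w, hw⟩ := hr.exists_walk_length_eq_dist
  match w, hw with
  | .nil, _ => exact absurd rfl hne
  | .cons h .nil, _ => exact Or.inl h
  | .cons h₁ (.cons h₂ .nil), _ => exact Or.inr (Or.inl ⟨_, h₁, h₂⟩)
  | .cons h₁ (.cons h₂ (.cons h₃ .nil)), hw =>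
    have h3 : G.dist x y = 3 := hw.symm
    refine Or.inr (Or.inr ⟨_, _, h₁, h₂, h₃, ?_, ?_⟩)
    · rintro rfl
      have := G.dist_le (.cons h₃ .nil)
      simp_all
    · rintro rfl
      have := G.dist_le (.cons h₁ .nil)
      simp_all
  | .cons _ (.cons _ (.cons _ (.cons _ w))), hw =>
    simp only [Walk.length_cons] at hw
    omega

theorem stmt15 {V : Type*} [Fintype V] (G : SimpleGraph V) (hconn : G.Connected)
    (hcrit : ∀ e ∈ G.edgeSet, iso G < iso (subdivide G {e}))
    (D : Finset V) (hiso : IsIsolating G ↑D) (hmin : D.card = iso G) :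
    ∀ x ∈ D, ∀ y ∈ D, x ≠ y → 3 < G.dist x y := by
  intro x hx y hy hxy
  by_contra! hdist
  have key {p q : V} (hpq : G.Adj p q) := not_inClosedNbhd_deleteEdges_both_ends hcrit hiso hmin hpq
  obtain hxy' | ⟨a, hxa, hay⟩ | ⟨a, b, hxa, hab, hby, hxb, hay⟩ :=
    adj_chain_of_dist_le_three (hconn.preconnected x y) hxy hdist
  · exact key hxy' ⟨inClosedNbhd_self hx, inClosedNbhd_self hy⟩
  · exact key hay ⟨inClosedNbhd_deleteEdges_pair hx hxa hxy, inClosedNbhd_self hy⟩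
  · refine key hab ⟨inClosedNbhd_deleteEdges_pair hx hxa hxb, ?_⟩
    rw [Sym2.eq_swap]
    exact inClosedNbhd_deleteEdges_pair hy hby.symm hay.symm
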